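/- arXiv:1604.06676 — 4 statements merged into one kernel-verified Lean document; each statement's English description precedes it below -/
import Mathlib

section
/- In a special GDN-Poisson admissible algebra with operation x∘y := x∗(Dy), the identity (x∘y)·z − x∘(y·z) = −x∗(y·(Dz)) + x∗(y·z·(De)) holds for all x,y,z; consequently (x∘y)·z − x∘(y·z) is symmetric in x and y, i.e. equals (y∘x)·z − y∘(x·z). -/
/-- in a special GDN-Poisson admissible algebra with `x ∘ y := x ∗ D y`,
`(x∘y)·z − x∘(y·z) = −x∗(y·Dz) + x∗(y·z·De)`, hence this expression is symmetric
in `x` and `y`. (Here `e = 1`.) -/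
theorem specialGDNPoissonAdmissible_circ_mul_sym {k A : Type*} [Field k] [CommRing A]
    [Algebra k A] (star : A →ₗ[k] A →ₗ[k] A) (D : A →ₗ[k] A)
    (hcomm : ∀ x y : A, star x y = star y x)
    (hassoc : ∀ x y z : A, star (star x y) z = star x (star y z))
    (hms : ∀ x y z : A, star (x * y) z = x * star y z)
    (hDs : ∀ x y : A, D (star x y) = star (D x) y + star x (D y))
    (hDm : ∀ x y : A, D (x * y) = D x * y + x * D y - x * y * D 1) :
    (∀ x y z : A,
      star x (D y) * z - star x (D (y * z))
        = -star x (y * D z) + star x (y * z * D 1)) ∧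
    (∀ x y z : A,
      star x (D y) * z - star x (D (y * z))
        = star y (D x) * z - star y (D (x * z))) := by
  set s := star 1 1 with hs
  have key : ∀ a b : A, star a b = a * b * s := by
    intro a b
    calc star a b = star (a * 1) b := by rw [mul_one]
      _ = a * star 1 b := hms a 1 b
      _ = a * star b 1 := by rw [hcomm]
      _ = a * star (b * 1) 1 := by rw [mul_one]
      _ = a * (b * star 1 1) := by rw [hms]
      _ = a * b * s := by rw [hs]; ring
  constructor
  · intro x y z
    simp only [hDm, key]
    ring
  · intro x y z
    simp only [hDm, key]
    ring
end

section
/- Let A be a GDN-Poisson algebra with unit e for the product ·. Then for any u ∈ A and any a₁,…,aₙ ∈ A (n ≥ 1): u ∘ (a₁·a₂·⋯·aₙ) = Σ_{i=1}^{n} (u·a₁·⋯·âᵢ·⋯·aₙ) ∘ aᵢ − (n−1)·((u·a₁·⋯·aₙ) ∘ e), where âᵢ means aᵢ is omitted from the product. -/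
lemma gdn_aux {A : Type*} [CommRing A] {ι : Type*} [DecidableEq ι] (f : A → A)
    (hf : ∀ x z : A, f (x * z) = x * f z + z * f x - x * z * f 1) (a : ι → A) :
    ∀ s : Finset ι, s.Nonempty → f (∏ i ∈ s, a i)
      = (∑ i ∈ s, (∏ j ∈ s.erase i, a j) * f (a i))
          - (s.card - 1) • ((∏ i ∈ s, a i) * f 1) := by
  intro s
  induction s using Finset.induction_on with
  | empty => intro h; exact absurd h (by simp)
  | @insert i s hi ih =>
    intro _
    rcases s.eq_empty_or_nonempty with rfl | hs
    · simp
    · obtain ⟨m, hm⟩ : ∃ m, s.card = m + 1 :=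
        ⟨s.card - 1, (Nat.succ_pred_eq_of_pos (Finset.card_pos.mpr hs)).symm⟩
      rw [Finset.prod_insert hi, hf, ih hs, Finset.sum_insert hi,
        Finset.card_insert_of_notMem hi, hm]
      rw [Finset.erase_insert hi]
      have hsum : ∑ j ∈ s, (∏ l ∈ (insert i s).erase j, a l) * f (a j)
          = ∑ j ∈ s, a i * ((∏ l ∈ s.erase j, a l) * f (a j)) := by
        refine Finset.sum_congr rfl fun j hj => ?_
        have hji : j ≠ i := fun h => hi (h ▸ hj)
        rw [Finset.erase_insert_of_ne (Ne.symm hji),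
          Finset.prod_insert (fun h => hi (Finset.mem_of_mem_erase h))]
        ring
      rw [hsum]
      simp only [Nat.add_sub_cancel, Finset.mul_sum, mul_sub, mul_smul_comm, nsmul_eq_mul]
      push_cast
      ring

/-- in a GDN-Poisson algebra with unit `e = 1` for `·`, for `n ≥ 1`:
`u ∘ (a₁⋯aₙ) = Σᵢ (u·a₁⋯âᵢ⋯aₙ) ∘ aᵢ − (n−1)·((u·a₁⋯aₙ) ∘ e)`. -/
theorem gdnPoisson_circ_prod_expansion {k A : Type*} [Field k] [CommRing A] [Algebra k A]
    (circ : A →ₗ[k] A →ₗ[k] A)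
    (lsym : ∀ x y z : A, circ x (circ y z) - circ (circ x y) z
        = circ y (circ x z) - circ (circ y x) z)
    (rcomm : ∀ x y z : A, circ (circ x y) z = circ (circ x z) y)
    (comp1 : ∀ x y z : A, circ (x * y) z = x * circ y z)
    (comp2 : ∀ x y z : A, circ x y * z - circ x (y * z)
        = circ y x * z - circ y (x * z)) :
    ∀ (n : ℕ), 1 ≤ n → ∀ (u : A) (a : Fin n → A),
      circ u (∏ i, a i)
        = (∑ i, circ (u * ∏ j ∈ Finset.univ.erase i, a j) (a i))
            - (n - 1) • circ (u * ∏ i, a i) 1 := by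
  -- key: circ x z = x * circ 1 z
  have key : ∀ x z : A, circ x z = x * circ 1 z := by
    intro x z
    have := comp1 x 1 z
    rwa [mul_one] at this
  have hf : ∀ x z : A, circ 1 (x * z)
      = x * circ 1 z + z * circ 1 x - x * z * circ 1 1 := by
    intro x z
    have h := comp2 x 1 z
    rw [one_mul, key x 1, key x z] at h
    linear_combination h
  intro n hn u a
  haveI : Nonempty (Fin n) := ⟨⟨0, hn⟩⟩
  have hne : (Finset.univ : Finset (Fin n)).Nonempty := Finset.univ_nonempty
  have key2 := gdn_aux (fun z => circ 1 z) hf a Finset.univ hne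
  simp only [Finset.card_univ, Fintype.card_fin] at key2
  rw [key u, key2, mul_sub, Finset.mul_sum, mul_smul_comm]
  congr 1
  · refine Finset.sum_congr rfl fun i _ => ?_
    rw [key (u * ∏ j ∈ Finset.univ.erase i, a j) (a i)]
    ring
  · congr 1
    rw [key (u * ∏ i, a i) 1]
    ring
end

section
/- Let A be a GDN-Poisson algebra with unit e for ·. Then for any u, a, b ∈ A: u∘(a·b) = (u·b)∘a + (u·a)∘b − (u·a·b)∘e. (This is the base case n = 2 of the expansion of u∘(a₁⋯aₙ).) -/
/-- in a GDN-Poisson algebra with unit `e = 1` for `·`: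
`u∘(a·b) = (u·b)∘a + (u·a)∘b − (u·a·b)∘e`. -/
theorem gdnPoisson_circ_mul_two {k A : Type*} [Field k] [CommRing A] [Algebra k A]
    (circ : A →ₗ[k] A →ₗ[k] A)
    (lsym : ∀ x y z : A, circ x (circ y z) - circ (circ x y) z
        = circ y (circ x z) - circ (circ y x) z)
    (rcomm : ∀ x y z : A, circ (circ x y) z = circ (circ x z) y)
    (comp1 : ∀ x y z : A, circ (x * y) z = x * circ y z)
    (comp2 : ∀ x y z : A, circ x y * z - circ x (y * z)
        = circ y x * z - circ y (x * z)) :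
    ∀ u a b : A, circ u (a * b) = circ (u * b) a + circ (u * a) b - circ (u * a * b) 1 := by
  intro u a b
  have e1 : ∀ x y : A, circ x y = x * circ 1 y := by
    intro x y
    rw [← comp1 x 1 y, mul_one]
  have h := comp2 1 a b
  rw [one_mul, e1 a, e1 a] at h
  rw [e1 u, e1 (u * b), e1 (u * a), e1 (u * a * b)]
  linear_combination (-u) * h
end

section
/- Let (B, ·, D) be the algebra of differential polynomials k{X} (free commutative associative differential algebra on a set X), equipped with f∘g := f·(Dg). Let S ⊆ B. Then the ideal of B generated by the image of S as a differential algebra ideal equals the ideal generated by S in (B, ·, ∘) as a GDN-Poisson algebra ideal; in particular, for any g ∈ B and r ≥ 0, D^r g = e∘(e∘(⋯∘(e∘g)⋯)) (r-fold application of e∘−), where e is the unit. -/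
/-- The free commutative associative differential algebra `k{X}`, modelled as
`MvPolynomial (X × ℕ) k`, where the variable `(x, i)` stands for `Dⁱx`. -/
abbrev DiffPoly (k : Type*) [CommRing k] (X : Type*) : Type _ :=
  MvPolynomial (X × ℕ) k

/-- The derivation `D` of `k{X}` with `D (x, i) = (x, i+1)` (and `De = D 1 = 0`). -/
noncomputable def diffPolyD (k : Type*) [CommRing k] (X : Type*) :
    Derivation k (DiffPoly k X) (DiffPoly k X) :=
  MvPolynomial.mkDerivation k (fun p => MvPolynomial.X (p.1, p.2 + 1))

/-- in `B = k{X}` with `f∘g := f·(Dg)`, for any `S ⊆ B` the differential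
ideal generated by `S` (smallest ideal containing `S` closed under `D`) coincides with
the GDN-Poisson ideal generated by `S` (smallest subspace `I` with `S ⊆ I`, `B·I ⊆ I`,
`B∘I ⊆ I`, `I∘B ⊆ I`); in particular `Dʳ g` is the `r`-fold iterate `e∘(e∘(⋯(e∘g)))`. -/
theorem diffPoly_diffIdeal_eq_gdnPoissonIdeal {k : Type*} [Field k] (X : Type*)
    (S : Set (DiffPoly k X)) :
    (↑(sInf {I : Ideal (DiffPoly k X) |
        S ⊆ I ∧ ∀ f ∈ I, diffPolyD k X f ∈ I}) : Set (DiffPoly k X))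
      = ↑(sInf {I : Submodule k (DiffPoly k X) |
          S ⊆ I ∧ ∀ b : DiffPoly k X, ∀ x ∈ I,
            b * x ∈ I ∧ b * diffPolyD k X x ∈ I ∧ x * diffPolyD k X b ∈ I}) ∧
    ∀ (g : DiffPoly k X) (r : ℕ),
      (fun h => (1 : DiffPoly k X) * diffPolyD k X h)^[r] g = (⇑(diffPolyD k X))^[r] g := by
  constructor
  · ext x
    simp only [SetLike.mem_coe, Submodule.mem_sInf, Set.mem_setOf_eq]
    constructor
    · intro h J hJ
      exact h
        { carrier := J
          add_mem' := fun ha hb => J.add_mem ha hb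
          zero_mem' := J.zero_mem
          smul_mem' := fun b y hy => by
            simpa [smul_eq_mul] using (hJ.2 b y hy).1 }
        ⟨hJ.1, fun f hf => by simpa using (hJ.2 1 f hf).2.1⟩
    · intro h I hI
      exact h (I.restrictScalars k)
        ⟨hI.1, fun b y hy =>
          ⟨Ideal.mul_mem_left I b hy, Ideal.mul_mem_left I b (hI.2 y hy),
            Ideal.mul_mem_right _ I hy⟩⟩
  · intro g r
    simp [one_mul]
end
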